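/- arXiv:2104.02928 — 3 statements merged into one kernel-verified Lean document; each statement's English description precedes it below -/
import Mathlib

section
/- Let n ≥ 3, Ω = ZMod n, and let 𝓐 be a circulant AST on Ω. Then every nontrivial relation of 𝓐 is a disjoint union of nontrivial 3-circulants, each of which is both 12-thin and 13-thin. -/
open Set

namespace CirculantAST

/-- The trivial relation `R₀ = {(x,x,x) : x ∈ Ω}`. -/
def triv0 (Ω : Type*) : Set (Ω × Ω × Ω) := {t | t.1 = t.2.1 ∧ t.2.1 = t.2.2}

/-- The trivial relation `R₁ = {(x,y,y) : x ≠ y}`. -/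
def triv1 (Ω : Type*) : Set (Ω × Ω × Ω) := {t | t.1 ≠ t.2.1 ∧ t.2.1 = t.2.2}

/-- The trivial relation `R₂ = {(x,y,x) : x ≠ y}`. -/
def triv2 (Ω : Type*) : Set (Ω × Ω × Ω) := {t | t.1 = t.2.2 ∧ t.1 ≠ t.2.1}

/-- The trivial relation `R₃ = {(x,x,y) : x ≠ y}`. -/
def triv3 (Ω : Type*) : Set (Ω × Ω × Ω) := {t | t.1 = t.2.1 ∧ t.2.1 ≠ t.2.2}

/-- The set of the four trivial relations. -/
def trivials (Ω : Type*) : Set (Set (Ω × Ω × Ω)) := {triv0 Ω, triv1 Ω, triv2 Ω, triv3 Ω}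

/-- Coordinate permutation of a triple: `(x₁,x₂,x₃) ↦ (x_{1σ}, x_{2σ}, x_{3σ})`. -/
def permTriple {Ω : Type*} (σ : Equiv.Perm (Fin 3)) (t : Ω × Ω × Ω) : Ω × Ω × Ω :=
  (![t.1, t.2.1, t.2.2] (σ 0), ![t.1, t.2.1, t.2.2] (σ 1), ![t.1, t.2.1, t.2.2] (σ 2))

/-- An association scheme on triples (AST) on `Ω`, viewed as the set of its relations:
a partition of `Ω³` containing the four trivial relations and at least one further
(nontrivial) relation (i.e. `m ≥ 4`), satisfying axioms A1, A2, A3. -/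
def IsAST (Ω : Type*) (A : Set (Set (Ω × Ω × Ω))) : Prop :=
  -- partition of Ω³ into nonempty relations
  (∀ R ∈ A, R.Nonempty) ∧
  (∀ t : Ω × Ω × Ω, ∃! R, R ∈ A ∧ t ∈ R) ∧
  -- the four trivial relations belong to A
  trivials Ω ⊆ A ∧
  -- m ≥ 4 : there is at least one nontrivial relation
  (∃ R ∈ A, R ∉ trivials Ω) ∧
  -- A1
  (∀ R ∈ A, R ∉ trivials Ω →
    ∃ c : ℕ, 0 < c ∧ ∀ x y : Ω, x ≠ y → {z : Ω | (x, y, z) ∈ R}.ncard = c) ∧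
  -- A2
  (∀ Ri ∈ A, ∀ Rj ∈ A, ∀ Rk ∈ A, ∀ Rl ∈ A, ∃ c : ℕ,
    ∀ x y z : Ω, (x, y, z) ∈ Rl →
      {w : Ω | (w, y, z) ∈ Ri ∧ (x, w, z) ∈ Rj ∧ (x, y, w) ∈ Rk}.ncard = c) ∧
  -- A3
  (∀ R ∈ A, ∀ σ : Equiv.Perm (Fin 3), permTriple σ '' R ∈ A)

variable {n : ℕ}

/-- A ternary relation on `ZMod n` is a 3-circulant if it is invariant under
the simultaneous cyclic shift `+1` in all coordinates. -/
def IsCirculant (R : Set (ZMod n × ZMod n × ZMod n)) : Prop :=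
  ∀ i j k : ZMod n, (i, j, k) ∈ R → (i + 1, j + 1, k + 1) ∈ R

/-- A circulant AST: an AST on `ZMod n` each of whose relations is a 3-circulant. -/
def IsCirculantAST (A : Set (Set (ZMod n × ZMod n × ZMod n))) : Prop :=
  IsAST (ZMod n) A ∧ ∀ R ∈ A, IsCirculant R

/-- A nontrivial 3-circulant: nonempty and all triples have pairwise distinct entries. -/
def IsNontrivialCirculant (R : Set (ZMod n × ZMod n × ZMod n)) : Prop :=
  IsCirculant R ∧ R.Nonempty ∧
    ∀ t ∈ R, t.1 ≠ t.2.1 ∧ t.1 ≠ t.2.2 ∧ t.2.1 ≠ t.2.2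

/-- The set `X = {(i,j) : i ≠ 0, j ≠ 0, i ≠ j}`. -/
def Xset (n : ℕ) : Set (ZMod n × ZMod n) := {p | p.1 ≠ 0 ∧ p.2 ≠ 0 ∧ p.1 ≠ p.2}

/-- The 3-circulant `R_I = {(x, i+x, j+x) : x ∈ Ω, (i,j) ∈ I}`. -/
def RI (I : Set (ZMod n × ZMod n)) : Set (ZMod n × ZMod n × ZMod n) :=
  {t | ∃ x : ZMod n, ∃ p ∈ I, t = (x, p.1 + x, p.2 + x)}

/-- The transpose map `I ↦ I^T = {(j,i) : (i,j) ∈ I}`. -/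
def transI (I : Set (ZMod n × ZMod n)) : Set (ZMod n × ZMod n) :=
  (fun p => (p.2, p.1)) '' I

/-- The map `I ↦ I^τ = {(-i, j-i) : (i,j) ∈ I}`. -/
def tauI (I : Set (ZMod n × ZMod n)) : Set (ZMod n × ZMod n) :=
  (fun p => (-p.1, p.2 - p.1)) '' I

/-- An AST-regular partition of `X`. -/
def IsASTRegular (P : Set (Set (ZMod n × ZMod n))) : Prop :=
  -- a partition of X into nonempty parts
  (∀ I ∈ P, I ⊆ Xset n ∧ I.Nonempty) ∧
  (∀ p ∈ Xset n, ∃! I, I ∈ P ∧ p ∈ I) ∧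
  -- (a) projections and regularity constants
  (∀ I ∈ P, Prod.fst '' I = {x : ZMod n | x ≠ 0} ∧ Prod.snd '' I = {x : ZMod n | x ≠ 0} ∧
    ∃ c : ℕ, 0 < c ∧ ∀ x : ZMod n, x ≠ 0 →
      {j : ZMod n | (x, j) ∈ I}.ncard = c ∧ {i : ZMod n | (i, x) ∈ I}.ncard = c) ∧
  -- (b) invariance under T and τ
  (∀ I ∈ P, transI I ∈ P ∧ tauI I ∈ P) ∧
  -- (c) intersection numbers
  (∀ I ∈ P, ∀ J ∈ P, ∀ K ∈ P, ∀ L ∈ P, ∃ c : ℕ, ∀ q ∈ L,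
    {w : ZMod n | w ≠ 0 ∧ w ≠ q.1 ∧ w ≠ q.2 ∧
      (q.1 - w, q.2 - w) ∈ I ∧ (w, q.2) ∈ J ∧ (q.1, w) ∈ K}.ncard = c)

/-- The family of relations `𝓐(𝓘) = {R₀,R₁,R₂,R₃} ∪ {R_I : I ∈ 𝓘}`. -/
def ASTofPartition (P : Set (Set (ZMod n × ZMod n))) : Set (Set (ZMod n × ZMod n × ZMod n)) :=
  trivials (ZMod n) ∪ (RI '' P)

/-- The projection `σ₁₂ : (x₁,x₂,x₃) ↦ (x₁,x₂)`. -/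
def sgm12 {Ω : Type*} (t : Ω × Ω × Ω) : Ω × Ω := (t.1, t.2.1)

/-- The projection `σ₁₃ : (x₁,x₂,x₃) ↦ (x₁,x₃)`. -/
def sgm13 {Ω : Type*} (t : Ω × Ω × Ω) : Ω × Ω := (t.1, t.2.2)

/-- The projection `σ₂₃ : (x₁,x₂,x₃) ↦ (x₂,x₃)`. -/
def sgm23 {Ω : Type*} (t : Ω × Ω × Ω) : Ω × Ω := (t.2.1, t.2.2)

/-- `R` is thin with respect to the coordinate projection `f = σ_{ab}` if `f` is
one-to-one on `R` with image `Ω^[2] = {(x,y) : x ≠ y}`. -/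
def ThinVia {Ω : Type*} (R : Set (Ω × Ω × Ω)) (f : Ω × Ω × Ω → Ω × Ω) : Prop :=
  Set.InjOn f R ∧ f '' R = {p : Ω × Ω | p.1 ≠ p.2}

/-- Regularity condition of Definition (a) with parameter `c`. -/
def RegPar (I : Set (ZMod n × ZMod n)) (c : ℕ) : Prop :=
  Prod.fst '' I = {x : ZMod n | x ≠ 0} ∧ Prod.snd '' I = {x : ZMod n | x ≠ 0} ∧
  ∀ x : ZMod n, x ≠ 0 →
    {j : ZMod n | (x, j) ∈ I}.ncard = c ∧ {i : ZMod n | (i, x) ∈ I}.ncard = c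

/-- A regular bipartite graph on `s × s` with all row and column degrees `c`
decomposes into `c` perfect matchings. -/
lemma decomp_matchings {α : Type*} [DecidableEq α] (s : Finset α) :
    ∀ (c : ℕ) (E : Finset (α × α)), E ⊆ s ×ˢ s →
      (∀ i ∈ s, (E.filter (fun p => p.1 = i)).card = c) →
      (∀ j ∈ s, (E.filter (fun p => p.2 = j)).card = c) →
      ∃ M : Fin c → Finset (α × α),
        (∀ k, M k ⊆ E ∧ (∀ i ∈ s, ∃! j, (i, j) ∈ M k) ∧ (∀ j ∈ s, ∃! i, (i, j) ∈ M k)) ∧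
        (Pairwise fun k l => Disjoint (M k) (M l)) ∧
        (∀ p, p ∈ E ↔ ∃ k, p ∈ M k) := by
  intro c
  induction c with
  | zero =>
    intro E hEs hrow _
    refine ⟨Fin.elim0, fun k => k.elim0, fun k => k.elim0, fun p => ?_⟩
    constructor
    · intro hp
      have h1 := hEs hp
      rw [Finset.mem_product] at h1
      have := hrow p.1 h1.1
      rw [Finset.card_eq_zero, Finset.filter_eq_empty_iff] at this
      exact absurd rfl (this hp)
    · rintro ⟨k, -⟩
      exact k.elim0
  | succ c ih =>
    intro E hEs hrow hcol
    -- Hall's theorem setup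
    set t : {x // x ∈ s} → Finset α := fun i => (E.filter (fun p => p.1 = i.1)).image Prod.snd
      with ht
    have htcard : ∀ i : {x // x ∈ s}, (t i).card = c + 1 := by
      intro i
      show ((E.filter (fun p => p.1 = i.1)).image Prod.snd).card = c + 1
      rw [Finset.card_image_of_injOn, hrow i.1 i.2]
      intro p hp q hq hpq
      simp only [Finset.coe_filter, Set.mem_setOf_eq] at hp hq
      exact Prod.ext (hp.2.trans hq.2.symm) hpq
    have hall : ∀ u : Finset {x // x ∈ s}, u.card ≤ (u.biUnion t).card := by
      intro u
      have key : u.card * (c + 1) ≤ (u.biUnion t).card * (c + 1) := by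
        -- count edges in F
        set F : Finset (α × α) := E.filter (fun p => ∃ i ∈ u, p.1 = i.1) with hF
        have hcard1 : F.card = u.card * (c + 1) := by
          have : F = u.biUnion (fun i => E.filter (fun p => p.1 = i.1)) := by
            ext p
            simp only [hF, Finset.mem_filter, Finset.mem_biUnion]
            constructor
            · rintro ⟨hp, i, hi, h⟩; exact ⟨i, hi, hp, h⟩
            · rintro ⟨i, hi, hp, h⟩; exact ⟨hp, i, hi, h⟩
          rw [this, Finset.card_biUnion]
          · rw [Finset.sum_congr rfl (fun i hi => hrow i.1 i.2), Finset.sum_const,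
              smul_eq_mul]
          · intro i _ j _ hij
            simp only [Finset.disjoint_left, Finset.mem_filter]
            rintro p ⟨_, h1⟩ ⟨_, h2⟩
            exact hij (Subtype.ext (h1 ▸ h2))
        have hsub : F ⊆ E.filter (fun p => p.2 ∈ u.biUnion t) := by
          intro p hp
          simp only [hF, Finset.mem_filter] at hp
          obtain ⟨hpE, i, hi, hp1⟩ := hp
          refine Finset.mem_filter.2 ⟨hpE, Finset.mem_biUnion.2 ⟨i, hi, ?_⟩⟩
          exact Finset.mem_image.2 ⟨p, Finset.mem_filter.2 ⟨hpE, hp1⟩, rfl⟩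
        have hcard2 : (E.filter (fun p => p.2 ∈ u.biUnion t)).card
            ≤ (u.biUnion t).card * (c + 1) := by
          have heq : E.filter (fun p => p.2 ∈ u.biUnion t)
              = (u.biUnion t).biUnion (fun j => E.filter (fun p => p.2 = j)) := by
            ext p
            simp only [Finset.mem_filter, Finset.mem_biUnion]
            constructor
            · rintro ⟨hp, hj⟩; exact ⟨p.2, hj, hp, rfl⟩
            · rintro ⟨j, hj, hp, h⟩; exact ⟨hp, h ▸ hj⟩
          rw [heq]
          refine le_trans (Finset.card_biUnion_le) ?_
          have hstep : ∑ j ∈ u.biUnion t, (E.filter (fun p => p.2 = j)).card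
              ≤ ∑ _j ∈ u.biUnion t, (c + 1) := by
            refine Finset.sum_le_sum (fun j hj => ?_)
            by_cases hjs : j ∈ s
            · exact le_of_eq (hcol j hjs)
            · rw [Finset.card_eq_zero.mpr]
              · exact Nat.zero_le _
              · rw [Finset.filter_eq_empty_iff]
                intro p hp h
                exact hjs (h ▸ (Finset.mem_product.1 (hEs hp)).2)
          calc ∑ j ∈ u.biUnion t, (E.filter (fun p => p.2 = j)).card
              ≤ _ := hstep
            _ = (u.biUnion t).card * (c + 1) := by rw [Finset.sum_const, smul_eq_mul]
        calc u.card * (c + 1) = F.card := hcard1.symm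
          _ ≤ _ := Finset.card_le_card hsub
          _ ≤ _ := hcard2
      exact Nat.le_of_mul_le_mul_right key (Nat.succ_pos c)
    obtain ⟨f, hfinj, hft⟩ := (Finset.all_card_le_biUnion_card_iff_exists_injective t).1 hall
    have hfE : ∀ i : {x // x ∈ s}, (i.1, f i) ∈ E := by
      intro i
      have := hft i
      rw [ht, Finset.mem_image] at this
      obtain ⟨p, hp, hp2⟩ := this
      rw [Finset.mem_filter] at hp
      have : p = (i.1, f i) := Prod.ext hp.2 hp2
      exact this ▸ hp.1
    -- first matching
    set M0 : Finset (α × α) := s.attach.image (fun i => (i.1, f i)) with hM0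
    have hM0E : M0 ⊆ E := by
      intro p hp
      rw [hM0, Finset.mem_image] at hp
      obtain ⟨i, _, rfl⟩ := hp
      exact hfE i
    have hM0row : ∀ i ∈ s, ∃! j, (i, j) ∈ M0 := by
      intro i hi
      refine ⟨f ⟨i, hi⟩, Finset.mem_image.2 ⟨⟨i, hi⟩, Finset.mem_attach _ _, rfl⟩, ?_⟩
      intro j hj
      rw [hM0, Finset.mem_image] at hj
      obtain ⟨i', _, hi'⟩ := hj
      have h1 : i'.1 = i := congrArg Prod.fst hi'
      have h2 : f i' = j := congrArg Prod.snd hi'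
      rw [← h2]; congr 1; exact Subtype.ext h1
    -- f is surjective onto s
    have hfs : ∀ i : {x // x ∈ s}, f i ∈ s := fun i =>
      (Finset.mem_product.1 (hEs (hfE i))).2
    have hfsurj : ∀ j ∈ s, ∃ i : {x // x ∈ s}, f i = j := by
      intro j hj
      have himg : s.attach.image f = s := by
        apply Finset.eq_of_subset_of_card_le
        · intro x hx
          rw [Finset.mem_image] at hx
          obtain ⟨i, _, rfl⟩ := hx
          exact hfs i
        · rw [Finset.card_image_of_injective _ hfinj, Finset.card_attach]
      rw [← himg, Finset.mem_image] at hj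
      obtain ⟨i, _, hi⟩ := hj
      exact ⟨i, hi⟩
    have hM0col : ∀ j ∈ s, ∃! i, (i, j) ∈ M0 := by
      intro j hj
      obtain ⟨i, hi⟩ := hfsurj j hj
      refine ⟨i.1, hi ▸ Finset.mem_image.2 ⟨i, Finset.mem_attach _ _, rfl⟩, ?_⟩
      intro i' hi'
      rw [hM0, Finset.mem_image] at hi'
      obtain ⟨i'', _, hi''⟩ := hi'
      have h1 : i''.1 = i' := congrArg Prod.fst hi''
      have h2 : f i'' = j := congrArg Prod.snd hi''
      rw [← h1]; congr 1; exact hfinj (h2.trans hi.symm)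
    -- remove M0, apply ih
    have hM0rowcard : ∀ i ∈ s, (M0.filter (fun p => p.1 = i)).card = 1 := by
      intro i hi
      obtain ⟨j, hj, hju⟩ := hM0row i hi
      rw [Finset.card_eq_one]
      refine ⟨(i, j), ?_⟩
      ext p
      simp only [Finset.mem_filter, Finset.mem_singleton]
      constructor
      · rintro ⟨hp, h1⟩
        have : p = (i, p.2) := Prod.ext h1 rfl
        rw [this] at hp ⊢
        rw [hju p.2 hp]
      · rintro rfl; exact ⟨hj, rfl⟩
    have hM0colcard : ∀ j ∈ s, (M0.filter (fun p => p.2 = j)).card = 1 := by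
      intro j hj
      obtain ⟨i, hi, hiu⟩ := hM0col j hj
      rw [Finset.card_eq_one]
      refine ⟨(i, j), ?_⟩
      ext p
      simp only [Finset.mem_filter, Finset.mem_singleton]
      constructor
      · rintro ⟨hp, h1⟩
        have : p = (p.1, j) := Prod.ext rfl h1
        rw [this] at hp ⊢
        rw [hiu p.1 hp]
      · rintro rfl; exact ⟨hi, rfl⟩
    have hrow' : ∀ i ∈ s, ((E \ M0).filter (fun p => p.1 = i)).card = c := by
      intro i hi
      classical
      have h1 : (E \ M0).filter (fun p => p.1 = i)
          = E.filter (fun p => p.1 = i) \ M0.filter (fun p => p.1 = i) := by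
        ext p
        simp only [Finset.mem_filter, Finset.mem_sdiff]
        tauto
      rw [h1, Finset.card_sdiff_of_subset (Finset.filter_subset_filter _ hM0E), hrow i hi,
        hM0rowcard i hi]
      omega
    have hcol' : ∀ j ∈ s, ((E \ M0).filter (fun p => p.2 = j)).card = c := by
      intro j hj
      classical
      have h1 : (E \ M0).filter (fun p => p.2 = j)
          = E.filter (fun p => p.2 = j) \ M0.filter (fun p => p.2 = j) := by
        ext p
        simp only [Finset.mem_filter, Finset.mem_sdiff]
        tauto
      rw [h1, Finset.card_sdiff_of_subset (Finset.filter_subset_filter _ hM0E), hcol j hj,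
        hM0colcard j hj]
      omega
    obtain ⟨M, hM1, hM2, hM3⟩ := ih (E \ M0) ((Finset.sdiff_subset).trans hEs) hrow' hcol'
    refine ⟨Fin.cons M0 M, ?_, ?_, ?_⟩
    · intro k
      induction k using Fin.cases with
      | zero =>
        simp only [Fin.cons_zero]
        exact ⟨hM0E, hM0row, hM0col⟩
      | succ k' =>
        simp only [Fin.cons_succ]
        exact ⟨((hM1 k').1).trans Finset.sdiff_subset, (hM1 k').2.1, (hM1 k').2.2⟩
    · have hdisj0 : ∀ k', Disjoint M0 (M k') := by
        intro k'
        rw [Finset.disjoint_left]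
        intro p hp hpl
        exact (Finset.mem_sdiff.1 ((hM1 k').1 hpl)).2 hp
      intro k l hkl
      induction k using Fin.cases with
      | zero =>
        induction l using Fin.cases with
        | zero => exact absurd rfl hkl
        | succ l' => simpa using hdisj0 l'
      | succ k' =>
        induction l using Fin.cases with
        | zero => simpa using (hdisj0 k').symm
        | succ l' =>
          simp only [Fin.cons_succ]
          exact hM2 (fun h => hkl (congrArg Fin.succ h))
    · intro p
      constructor
      · intro hp
        by_cases hp0 : p ∈ M0
        · exact ⟨0, by simpa using hp0⟩
        · obtain ⟨k, hk⟩ := (hM3 p).1 (Finset.mem_sdiff.2 ⟨hp, hp0⟩)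
          exact ⟨k.succ, by simpa using hk⟩
      · rintro ⟨k, hk⟩
        induction k using Fin.cases with
        | zero => exact hM0E (by simpa using hk)
        | succ k' => exact Finset.sdiff_subset ((hM1 k').1 (by simpa using hk))


lemma all_distinct_of_not_trivial {Ω : Type*} {A : Set (Set (Ω × Ω × Ω))}
    (hAST : IsAST Ω A) {R : Set (Ω × Ω × Ω)} (hR : R ∈ A) (hRnt : R ∉ trivials Ω) :
    ∀ t ∈ R, t.1 ≠ t.2.1 ∧ t.1 ≠ t.2.2 ∧ t.2.1 ≠ t.2.2 := by
  intro t ht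
  have key : ∀ T ∈ trivials Ω, t ∉ T := by
    intro T hT htT
    obtain ⟨W, hW, hWu⟩ := hAST.2.1 t
    have h1 := hWu R ⟨hR, ht⟩
    have h2 := hWu T ⟨hAST.2.2.1 hT, htT⟩
    exact hRnt ((h1.trans h2.symm) ▸ hT)
  have m0 : triv0 Ω ∈ trivials Ω := Or.inl rfl
  have m1 : triv1 Ω ∈ trivials Ω := Or.inr (Or.inl rfl)
  have m2 : triv2 Ω ∈ trivials Ω := Or.inr (Or.inr (Or.inl rfl))
  have m3 : triv3 Ω ∈ trivials Ω := Or.inr (Or.inr (Or.inr rfl))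
  refine ⟨?_, ?_, ?_⟩
  · intro h
    by_cases h23 : t.2.1 = t.2.2
    · exact key _ m0 ⟨h, h23⟩
    · exact key _ m3 ⟨h, h23⟩
  · intro h
    by_cases h12 : t.1 = t.2.1
    · exact key _ m0 ⟨h12, h12.symm.trans h⟩
    · exact key _ m2 ⟨h, h12⟩
  · intro h
    by_cases h12 : t.1 = t.2.1
    · exact key _ m0 ⟨h12, h⟩
    · exact key _ m1 ⟨h12, h⟩

lemma RI_mem_iff {n : ℕ} (J : Set (ZMod n × ZMod n)) (t : ZMod n × ZMod n × ZMod n) :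
    t ∈ RI J ↔ (t.2.1 - t.1, t.2.2 - t.1) ∈ J := by
  constructor
  · rintro ⟨x, p, hp, rfl⟩
    simpa using hp
  · intro h
    exact ⟨t.1, _, h, by simp⟩

/-- Every nontrivial relation of a circulant AST on `ZMod n` is a
disjoint union of nontrivial 3-circulants, each both `12`-thin and `13`-thin. -/
theorem circulantAST_nontrivial_disjoint_union_thin (n : ℕ) (hn : 3 ≤ n)
    (A : Set (Set (ZMod n × ZMod n × ZMod n))) (hA : IsCirculantAST A) :
    ∀ R ∈ A, R ∉ trivials (ZMod n) →
      ∃ (N : ℕ) (S : Fin N → Set (ZMod n × ZMod n × ZMod n)),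
        (∀ k, IsNontrivialCirculant (S k) ∧ ThinVia (S k) sgm12 ∧ ThinVia (S k) sgm13) ∧
        (Pairwise fun k l => Disjoint (S k) (S l)) ∧
        R = ⋃ k, S k := by
  classical
  haveI : NeZero n := ⟨by omega⟩
  haveI : Fact (1 < n) := ⟨by omega⟩
  obtain ⟨hAST, hCircA⟩ := hA
  intro R hR hRnt
  have hCirc : IsCirculant R := hCircA R hR
  have hdist := all_distinct_of_not_trivial hAST hR hRnt
  -- shifting by arbitrary constants
  have hshift : ∀ (R' : Set (ZMod n × ZMod n × ZMod n)), IsCirculant R' →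
      ∀ (c : ZMod n) (x y z : ZMod n), (x, y, z) ∈ R' → (x + c, y + c, z + c) ∈ R' := by
    intro R' hC c x y z h
    have hm : ∀ m : ℕ, (x + (m : ZMod n), y + (m : ZMod n), z + (m : ZMod n)) ∈ R' := by
      intro m
      induction m with
      | zero => simpa using h
      | succ m ih =>
        have h2 := hC _ _ _ ih
        have e : ∀ a : ZMod n, a + ((m : ℕ) + 1 : ℕ) = a + (m : ZMod n) + 1 := by
          intro a
          push_cast
          ring
        rw [e, e, e]
        exact h2
    have := hm c.val
    rwa [ZMod.natCast_rightInverse c] at this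
  have hmem : ∀ x y z : ZMod n, (x, y, z) ∈ R ↔ (0, y - x, z - x) ∈ R := by
    intro x y z
    constructor
    · intro h
      have := hshift R hCirc (-x) x y z h
      simpa [sub_eq_add_neg] using this
    · intro h
      have := hshift R hCirc x 0 (y - x) (z - x) h
      simpa using this
  -- the base set and edge set
  set s : Finset (ZMod n) := Finset.univ.filter (fun x : ZMod n => x ≠ 0) with hs
  have hmems : ∀ x : ZMod n, x ∈ s ↔ x ≠ 0 := by
    intro x; simp [hs]
  set E : Finset (ZMod n × ZMod n) :=
    Finset.univ.filter (fun p : ZMod n × ZMod n => (0, p.1, p.2) ∈ R) with hE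
  have hmemE : ∀ p : ZMod n × ZMod n, p ∈ E ↔ (0, p.1, p.2) ∈ R := by
    intro p; simp [hE]
  have hEX : ∀ p ∈ E, p.1 ≠ 0 ∧ p.2 ≠ 0 ∧ p.1 ≠ p.2 := by
    intro p hp
    obtain ⟨h1, h2, h3⟩ := hdist _ ((hmemE p).1 hp)
    exact ⟨(Ne.symm h1), (Ne.symm h2), h3⟩
  have hEs : E ⊆ s ×ˢ s := by
    intro p hp
    obtain ⟨h1, h2, _⟩ := hEX p hp
    exact Finset.mem_product.2 ⟨(hmems _).2 h1, (hmems _).2 h2⟩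
  -- row counts from A1
  obtain ⟨c, hc0, hcR⟩ := hAST.2.2.2.2.1 R hR hRnt
  have hrowE : ∀ i ∈ s, (E.filter (fun p => p.1 = i)).card = c := by
    intro i hi
    have hi0 : i ≠ 0 := (hmems i).1 hi
    have h1 : {z : ZMod n | (0, i, z) ∈ R}.ncard = c := hcR 0 i (Ne.symm hi0)
    have h2 : {z : ZMod n | (0, i, z) ∈ R}
        = ↑(Finset.univ.filter (fun z : ZMod n => (0, i, z) ∈ R)) := by
      ext z; simp
    rw [h2, Set.ncard_coe_finset] at h1
    rw [← h1]
    apply Finset.card_bij (fun p _ => p.2)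
    · intro p hp
      rw [Finset.mem_filter] at hp ⊢
      exact ⟨Finset.mem_univ _, hp.2 ▸ (hmemE p).1 hp.1⟩
    · intro p hp q hq hpq
      rw [Finset.mem_filter] at hp hq
      exact Prod.ext (hp.2.trans hq.2.symm) hpq
    · intro z hz
      rw [Finset.mem_filter] at hz
      exact ⟨(i, z), Finset.mem_filter.2 ⟨(hmemE (i, z)).2 hz.2, rfl⟩, rfl⟩
  -- column counts from A1 applied to the (23)-permuted relation
  have hσeval : ∀ (t : ZMod n × ZMod n × ZMod n),
      permTriple (Equiv.swap 1 2) t = (t.1, t.2.2, t.2.1) := by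
    intro t
    show (![t.1, t.2.1, t.2.2] (Equiv.swap 1 2 0), ![t.1, t.2.1, t.2.2] (Equiv.swap 1 2 1),
      ![t.1, t.2.1, t.2.2] (Equiv.swap 1 2 2)) = _
    rw [Equiv.swap_apply_of_ne_of_ne (by decide) (by decide), Equiv.swap_apply_left,
      Equiv.swap_apply_right]
    rfl
  set R' : Set (ZMod n × ZMod n × ZMod n) := permTriple (Equiv.swap 1 2) '' R with hR'
  have hR'mem : R' ∈ A := hAST.2.2.2.2.2.2 R hR (Equiv.swap 1 2)
  have hmemR' : ∀ x y z : ZMod n, (x, y, z) ∈ R' ↔ (x, z, y) ∈ R := by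
    intro x y z
    constructor
    · rintro ⟨t, ht, hteq⟩
      rw [hσeval] at hteq
      have h1 : t.1 = x := congrArg Prod.fst hteq
      have h2 : t.2.2 = y := congrArg (fun u => u.2.1) hteq
      have h3 : t.2.1 = z := congrArg (fun u => u.2.2) hteq
      have : t = (x, z, y) := by
        rw [← h1, ← h2, ← h3]
      exact this ▸ ht
    · intro h
      exact ⟨(x, z, y), h, by rw [hσeval]⟩
  have hR'nt : R' ∉ trivials (ZMod n) := by
    intro hTriv
    obtain ⟨t, ht⟩ := hAST.1 R hR
    have ht' : (t.1, t.2.2, t.2.1) ∈ R' := (hmemR' t.1 t.2.2 t.2.1).2 ht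
    obtain ⟨h1, h2, h3⟩ := hdist t ht
    rcases hTriv with h | h | h | h <;> rw [h] at ht'
    · exact h2 ht'.1
    · exact h3 ht'.2.symm
    · exact h1 ht'.1
    · exact h2 ht'.1
  obtain ⟨c', hc'0, hc'R⟩ := hAST.2.2.2.2.1 R' hR'mem hR'nt
  have hcolE : ∀ j ∈ s, (E.filter (fun p => p.2 = j)).card = c' := by
    intro j hj
    have hj0 : j ≠ 0 := (hmems j).1 hj
    have h1 : {z : ZMod n | (0, j, z) ∈ R'}.ncard = c' := hc'R 0 j (Ne.symm hj0)
    have h2 : {z : ZMod n | (0, j, z) ∈ R'}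
        = ↑(Finset.univ.filter (fun z : ZMod n => (0, z, j) ∈ R)) := by
      ext z
      simp only [Set.mem_setOf_eq, Finset.coe_filter, Finset.mem_univ, true_and]
      exact hmemR' 0 j z
    rw [h2, Set.ncard_coe_finset] at h1
    rw [← h1]
    apply Finset.card_bij (fun p _ => p.1)
    · intro p hp
      rw [Finset.mem_filter] at hp ⊢
      exact ⟨Finset.mem_univ _, hp.2 ▸ (hmemE p).1 hp.1⟩
    · intro p hp q hq hpq
      rw [Finset.mem_filter] at hp hq
      exact Prod.ext hpq (hp.2.trans hq.2.symm)
    · intro z hz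
      rw [Finset.mem_filter] at hz
      exact ⟨(z, j), Finset.mem_filter.2 ⟨(hmemE (z, j)).2 hz.2, rfl⟩, rfl⟩
  -- double counting shows c = c'
  have hcc' : c' = c := by
    have h1 : E.card = ∑ i ∈ s, (E.filter (fun p => p.1 = i)).card :=
      Finset.card_eq_sum_card_fiberwise (fun p hp => (Finset.mem_product.1 (hEs hp)).1)
    have h2 : E.card = ∑ j ∈ s, (E.filter (fun p => p.2 = j)).card :=
      Finset.card_eq_sum_card_fiberwise (fun p hp => (Finset.mem_product.1 (hEs hp)).2)
    rw [Finset.sum_congr rfl hrowE, Finset.sum_const, smul_eq_mul] at h1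
    rw [Finset.sum_congr rfl hcolE, Finset.sum_const, smul_eq_mul] at h2
    have hsne : 0 < s.card := by
      refine Finset.card_pos.2 ⟨1, (hmems 1).2 ?_⟩
      exact one_ne_zero
    exact Nat.eq_of_mul_eq_mul_left hsne (h2.symm.trans h1)
  rw [hcc'] at hcolE
  -- decompose E into c perfect matchings
  obtain ⟨M, hM1, hM2, hM3⟩ := decomp_matchings s c E hEs hrowE hcolE
  -- package the answer
  refine ⟨c, fun k => RI (↑(M k) : Set (ZMod n × ZMod n)), ?_, ?_, ?_⟩
  · intro k
    obtain ⟨hMkE, hMkrow, hMkcol⟩ := hM1 k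
    have hMkX : ∀ p ∈ M k, p.1 ≠ 0 ∧ p.2 ≠ 0 ∧ p.1 ≠ p.2 := fun p hp => hEX p (hMkE hp)
    have hdistk : ∀ t ∈ RI (↑(M k) : Set (ZMod n × ZMod n)),
        t.1 ≠ t.2.1 ∧ t.1 ≠ t.2.2 ∧ t.2.1 ≠ t.2.2 := by
      intro t ht
      rw [RI_mem_iff, Finset.mem_coe] at ht
      obtain ⟨h1, h2, h3⟩ := hMkX _ ht
      refine ⟨fun h => h1 (by rw [← h]; ring), fun h => h2 (by rw [← h]; ring),
        fun h => h3 (by rw [h])⟩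
    refine ⟨⟨?_, ?_, hdistk⟩, ⟨?_, ?_⟩, ⟨?_, ?_⟩⟩
    · -- IsCirculant
      intro i j l h
      rw [RI_mem_iff] at h ⊢
      simpa [add_sub_add_right_eq_sub] using h
    · -- Nonempty
      have h1s : (1 : ZMod n) ∈ s := (hmems 1).2 one_ne_zero
      obtain ⟨j, hj, -⟩ := hMkrow 1 h1s
      exact ⟨(0, 1, j), (RI_mem_iff _ _).2 (by simpa using hj)⟩
    · -- 12-InjOn
      intro t ht t' ht' heq
      have heq' : (t.1, t.2.1) = (t'.1, t'.2.1) := heq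
      injection heq' with h1 h2
      rw [RI_mem_iff, Finset.mem_coe] at ht ht'
      have hi : t.2.1 - t.1 ∈ s := (hmems _).2 (hMkX _ ht).1
      obtain ⟨j, -, hju⟩ := hMkrow _ hi
      have e1 := hju _ ht
      have ht'' : (t.2.1 - t.1, t'.2.2 - t.1) ∈ M k := by rw [h1, h2]; exact ht'
      have e2 := hju _ ht''
      have h4 : t.2.2 - t.1 = t'.2.2 - t.1 := e1.trans e2.symm
      have h3 : t.2.2 = t'.2.2 := sub_left_injective h4
      exact Prod.ext h1 (Prod.ext h2 h3)
    · -- 12-image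
      ext p
      simp only [Set.mem_image, Set.mem_setOf_eq]
      constructor
      · rintro ⟨t, ht, rfl⟩
        exact (hdistk t ht).1
      · intro hp
        have hi : p.2 - p.1 ∈ s := (hmems _).2 (sub_ne_zero.2 (Ne.symm hp))
        obtain ⟨j, hj, -⟩ := hMkrow _ hi
        refine ⟨(p.1, p.2, j + p.1), ?_, rfl⟩
        rw [RI_mem_iff, Finset.mem_coe]
        simpa using hj
    · -- 13-InjOn
      intro t ht t' ht' heq
      have heq' : (t.1, t.2.2) = (t'.1, t'.2.2) := heq
      injection heq' with h1 h3
      rw [RI_mem_iff, Finset.mem_coe] at ht ht'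
      have hj : t.2.2 - t.1 ∈ s := (hmems _).2 (hMkX _ ht).2.1
      obtain ⟨i, -, hiu⟩ := hMkcol _ hj
      have e1 := hiu _ ht
      have ht'' : (t'.2.1 - t.1, t.2.2 - t.1) ∈ M k := by rw [h1, h3]; exact ht'
      have e2 := hiu _ ht''
      have h4 : t.2.1 - t.1 = t'.2.1 - t.1 := e1.trans e2.symm
      have h2 : t.2.1 = t'.2.1 := sub_left_injective h4
      exact Prod.ext h1 (Prod.ext h2 h3)
    · -- 13-image
      ext p
      simp only [Set.mem_image, Set.mem_setOf_eq]
      constructor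
      · rintro ⟨t, ht, rfl⟩
        exact (hdistk t ht).2.1
      · intro hp
        have hj : p.2 - p.1 ∈ s := (hmems _).2 (sub_ne_zero.2 (Ne.symm hp))
        obtain ⟨i, hi, -⟩ := hMkcol _ hj
        refine ⟨(p.1, i + p.1, p.2), ?_, rfl⟩
        rw [RI_mem_iff, Finset.mem_coe]
        simpa using hi
  · intro k l hkl
    rw [Set.disjoint_left]
    intro t ht ht'
    rw [RI_mem_iff, Finset.mem_coe] at ht ht'
    exact (Finset.disjoint_left.1 (hM2 hkl)) ht ht'
  · ext t
    rw [Set.mem_iUnion]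
    have e1 : t ∈ R ↔ (0, t.2.1 - t.1, t.2.2 - t.1) ∈ R := hmem t.1 t.2.1 t.2.2
    have e2 : (0, t.2.1 - t.1, t.2.2 - t.1) ∈ R ↔ (t.2.1 - t.1, t.2.2 - t.1) ∈ E :=
      (hmemE (t.2.1 - t.1, t.2.2 - t.1)).symm
    rw [e1, e2, hM3]
    constructor
    · rintro ⟨k, hk⟩
      exact ⟨k, (RI_mem_iff _ _).2 hk⟩
    · rintro ⟨k, hk⟩
      exact ⟨k, (RI_mem_iff _ _).1 hk⟩

end CirculantAST
end

section
/- Let n ≥ 3, Ω = ZMod n, and let π : Ω∖{0} → Ω∖{0} be a bijection with π(x) ≠ x for all x ∈ Ω∖{0}. Set J = {(x, π(x)) : x ∈ Ω∖{0}} ⊆ X. Then R_J is a nontrivial 3-circulant that is both 12-thin and 13-thin. -/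
open Set

namespace CirculantAST

variable {n : ℕ}

/-- If `π` is a fixed-point-free bijection of `Ω∖{0}` and
`J = {(x, π(x)) : x ∈ Ω∖{0}}`, then `R_J` is a nontrivial 3-circulant which is both
`12`-thin and `13`-thin. -/
theorem RJ_of_derangement_thin (n : ℕ) (hn : 3 ≤ n)
    (π : {x : ZMod n // x ≠ 0} → {x : ZMod n // x ≠ 0})
    (hbij : Function.Bijective π) (hder : ∀ x, (π x).1 ≠ x.1)
    (J : Set (ZMod n × ZMod n))
    (hJ : J = {q : ZMod n × ZMod n | ∃ x : {x : ZMod n // x ≠ 0}, q = (x.1, (π x).1)}) :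
    IsNontrivialCirculant (RI J) ∧ ThinVia (RI J) sgm12 ∧ ThinVia (RI J) sgm13 := by
  have hmem : ∀ t : ZMod n × ZMod n × ZMod n,
      t ∈ RI J ↔ ∃ a : {x : ZMod n // x ≠ 0}, t = (t.1, a.1 + t.1, (π a).1 + t.1) := by
    intro t
    subst hJ
    constructor
    · rintro ⟨x, p, ⟨a, rfl⟩, rfl⟩
      exact ⟨a, rfl⟩
    · rintro ⟨a, h⟩
      exact ⟨t.1, (a.1, (π a).1), ⟨a, rfl⟩, h⟩
  have h1 : (1 : ZMod n) ≠ 0 := by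
    haveI : Fact (1 < n) := ⟨by omega⟩
    exact one_ne_zero
  refine ⟨⟨?_, ?_, ?_⟩, ⟨?_, ?_⟩, ⟨?_, ?_⟩⟩
  · -- circulant
    intro i j k hijk
    rcases (hmem _).mp hijk with ⟨a, ha⟩
    have hj : j = a.1 + i := congrArg (fun t => t.2.1) ha
    have hk : k = (π a).1 + i := congrArg (fun t => t.2.2) ha
    exact (hmem _).mpr ⟨a, by simp [hj, hk]; constructor <;> ring⟩
  · -- nonempty
    exact ⟨(0, (⟨1, h1⟩ : {x : ZMod n // x ≠ 0}).1, (π ⟨1, h1⟩).1),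
      (hmem _).mpr ⟨⟨1, h1⟩, by simp⟩⟩
  · -- distinct entries
    intro t ht
    rcases (hmem _).mp ht with ⟨a, ha⟩
    have h2 : t.2.1 = a.1 + t.1 := congrArg (fun t => t.2.1) ha
    have h3 : t.2.2 = (π a).1 + t.1 := congrArg (fun t => t.2.2) ha
    refine ⟨?_, ?_, ?_⟩
    · rw [h2]; intro h; exact a.2 (by linear_combination -h)
    · rw [h3]; intro h; exact (π a).2 (by linear_combination -h)
    · rw [h2, h3]; intro h; exact hder a (by linear_combination -h)
  · -- 12 injective
    intro t ht s hs heq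
    rcases (hmem _).mp ht with ⟨a, ha⟩
    rcases (hmem _).mp hs with ⟨b, hb⟩
    simp only [sgm12, Prod.mk.injEq] at heq
    obtain ⟨e1, e2⟩ := heq
    have h2t : t.2.1 = a.1 + t.1 := congrArg (fun t => t.2.1) ha
    have h2s : s.2.1 = b.1 + s.1 := congrArg (fun t => t.2.1) hb
    have hab : a = b := Subtype.ext (by
      have := h2t ▸ (h2s ▸ e2)
      linear_combination this - e1)
    have h3t : t.2.2 = (π a).1 + t.1 := congrArg (fun t => t.2.2) ha
    have h3s : s.2.2 = (π b).1 + s.1 := congrArg (fun t => t.2.2) hb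
    have : t.2.2 = s.2.2 := by rw [h3t, h3s, hab, e1]
    exact Prod.ext e1 (Prod.ext e2 this)
  · -- 12 image
    ext p
    constructor
    · rintro ⟨t, ht, rfl⟩
      rcases (hmem _).mp ht with ⟨a, ha⟩
      have h2 : t.2.1 = a.1 + t.1 := congrArg (fun t => t.2.1) ha
      simp only [sgm12, Set.mem_setOf_eq]
      rw [h2]; intro h; exact a.2 (by linear_combination -h)
    · intro hp
      have hne : p.2 - p.1 ≠ 0 := sub_ne_zero.mpr (Ne.symm hp)
      refine ⟨(p.1, p.2, (π ⟨p.2 - p.1, hne⟩).1 + p.1), (hmem _).mpr ⟨⟨p.2 - p.1, hne⟩, by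
        simp⟩, rfl⟩
  · -- 13 injective
    intro t ht s hs heq
    rcases (hmem _).mp ht with ⟨a, ha⟩
    rcases (hmem _).mp hs with ⟨b, hb⟩
    simp only [sgm13, Prod.mk.injEq] at heq
    obtain ⟨e1, e3⟩ := heq
    have h3t : t.2.2 = (π a).1 + t.1 := congrArg (fun t => t.2.2) ha
    have h3s : s.2.2 = (π b).1 + s.1 := congrArg (fun t => t.2.2) hb
    have hpab : π a = π b := Subtype.ext (by
      have := h3t ▸ (h3s ▸ e3)
      linear_combination this - e1)
    have hab : a = b := hbij.injective hpab
    have h2t : t.2.1 = a.1 + t.1 := congrArg (fun t => t.2.1) ha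
    have h2s : s.2.1 = b.1 + s.1 := congrArg (fun t => t.2.1) hb
    have : t.2.1 = s.2.1 := by rw [h2t, h2s, hab, e1]
    exact Prod.ext e1 (Prod.ext this e3)
  · -- 13 image
    ext p
    constructor
    · rintro ⟨t, ht, rfl⟩
      rcases (hmem _).mp ht with ⟨a, ha⟩
      have h3 : t.2.2 = (π a).1 + t.1 := congrArg (fun t => t.2.2) ha
      simp only [sgm13, Set.mem_setOf_eq]
      rw [h3]; intro h; exact (π a).2 (by linear_combination -h)
    · intro hp
      have hne : p.2 - p.1 ≠ 0 := sub_ne_zero.mpr (Ne.symm hp)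
      obtain ⟨a, hapre⟩ := hbij.surjective ⟨p.2 - p.1, hne⟩
      refine ⟨(p.1, a.1 + p.1, p.2), (hmem _).mpr ⟨a, by
        simp [hapre]⟩, rfl⟩


end CirculantAST
end

section
/- Let n ≥ 3, Ω = ZMod n, and let 𝓐 be a circulant AST on Ω. Then for every nontrivial relation R of 𝓐, the unique nonempty subset I ⊆ X with R = R_I satisfies: both coordinate projections of I equal Ω∖{0}, I^T = {(j,i) : (i,j) ∈ I} is also one of the subsets corresponding to a nontrivial relation of 𝓐, and the counting parameters agree: for each x ∈ Ω∖{0}, the number of j with (x,j) ∈ I equals the number of j with (x,j) ∈ I^T. -/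
open Set

namespace CirculantAST

variable {n : ℕ}

lemma mem_RI {I : Set (ZMod n × ZMod n)} {t : ZMod n × ZMod n × ZMod n} :
    t ∈ RI I ↔ (t.2.1 - t.1, t.2.2 - t.1) ∈ I := by
  constructor
  · rintro ⟨x, p, hp, rfl⟩
    simpa using hp
  · intro h
    exact ⟨t.1, _, h, by simp⟩

lemma mem_transI {I : Set (ZMod n × ZMod n)} {p : ZMod n × ZMod n} :
    p ∈ transI I ↔ (p.2, p.1) ∈ I := by
  constructor
  · rintro ⟨q, hq, rfl⟩; exact hq
  · intro h; exact ⟨(p.2, p.1), h, rfl⟩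

lemma permSwap23 {Ω : Type*} (t : Ω × Ω × Ω) :
    permTriple (Equiv.swap 1 2) t = (t.1, t.2.2, t.2.1) := by
  have h0 : (Equiv.swap 1 2 : Equiv.Perm (Fin 3)) 0 = 0 := by decide
  have h1 : (Equiv.swap 1 2 : Equiv.Perm (Fin 3)) 1 = 2 := by decide
  have h2 : (Equiv.swap 1 2 : Equiv.Perm (Fin 3)) 2 = 1 := by decide
  simp [permTriple, h0, h1, h2]

lemma image_swap23 {I : Set (ZMod n × ZMod n)} :
    permTriple (Equiv.swap 1 2) '' RI I = RI (transI I) := by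
  ext t
  constructor
  · rintro ⟨s, hs, rfl⟩
    rw [permSwap23, mem_RI]
    rw [mem_RI] at hs
    exact mem_transI.2 hs
  · intro ht
    refine ⟨(t.1, t.2.2, t.2.1), ?_, ?_⟩
    · rw [mem_RI]
      rw [mem_RI] at ht
      exact mem_transI.1 ht
    · rw [permSwap23]

lemma RI_not_trivial {I : Set (ZMod n × ZMod n)} (hX : I ⊆ Xset n) (hne : I.Nonempty) :
    RI I ∉ trivials (ZMod n) := by
  obtain ⟨p, hp⟩ := hne
  obtain ⟨h1, h2, h3⟩ := hX hp
  have hmem : ((0 : ZMod n), p.1, p.2) ∈ RI I := mem_RI.2 (by simpa using hp)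
  intro h
  simp only [trivials, Set.mem_insert_iff, Set.mem_singleton_iff] at h
  rcases h with h | h | h | h <;> rw [h] at hmem
  · exact h1 hmem.1.symm
  · exact h3 hmem.2
  · exact h2 hmem.1.symm
  · exact h1 hmem.1.symm

lemma A1_rows {A : Set (Set (ZMod n × ZMod n × ZMod n))} (hA : IsAST (ZMod n) A)
    {I : Set (ZMod n × ZMod n)} (hI : RI I ∈ A) (hnt : RI I ∉ trivials (ZMod n)) :
    ∃ c, 0 < c ∧ ∀ x : ZMod n, x ≠ 0 → {j : ZMod n | (x, j) ∈ I}.ncard = c := by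
  obtain ⟨c, hc, h⟩ := hA.2.2.2.2.1 (RI I) hI hnt
  refine ⟨c, hc, fun x hx => ?_⟩
  have hx' := h 0 x (Ne.symm hx)
  have heq : {z : ZMod n | ((0 : ZMod n), x, z) ∈ RI I} = {j : ZMod n | (x, j) ∈ I} := by
    ext z; simp [mem_RI]
  rwa [heq] at hx'

lemma ncard_rows [NeZero n] {I : Set (ZMod n × ZMod n)} (hI : ∀ p ∈ I, p.1 ≠ 0) {c : ℕ}
    (h : ∀ x : ZMod n, x ≠ 0 → {j : ZMod n | (x, j) ∈ I}.ncard = c) :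
    I.ncard = (n - 1) * c := by
  classical
  have hfin : I.Finite := Set.toFinite I
  rw [Set.ncard_eq_toFinset_card _ hfin]
  rw [Finset.card_eq_sum_card_fiberwise (f := Prod.fst)
      (t := Finset.univ.filter (fun x : ZMod n => x ≠ 0))
      (fun p hp => by simp [hI p (hfin.mem_toFinset.1 hp)])]
  have hfib : ∀ x ∈ Finset.univ.filter (fun x : ZMod n => x ≠ 0),
      (hfin.toFinset.filter (fun p => p.1 = x)).card = c := by
    intro x hx
    have hx0 : x ≠ 0 := (Finset.mem_filter.1 hx).2
    have hfin2 : {j : ZMod n | (x, j) ∈ I}.Finite := Set.toFinite _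
    have himg : hfin.toFinset.filter (fun p => p.1 = x)
        = hfin2.toFinset.image (fun j => (x, j)) := by
      ext p
      simp only [Finset.mem_filter, Set.Finite.mem_toFinset, Finset.mem_image,
        Set.mem_setOf_eq]
      constructor
      · rintro ⟨hp, rfl⟩
        exact ⟨p.2, hp, rfl⟩
      · rintro ⟨j, hj, rfl⟩
        exact ⟨hj, rfl⟩
    rw [himg, Finset.card_image_of_injective _
        (fun a b hab => by simpa using congrArg Prod.snd hab),
      ← Set.ncard_eq_toFinset_card _ hfin2, h x hx0]
  rw [Finset.sum_congr rfl hfib, Finset.sum_const, smul_eq_mul]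
  congr 1
  rw [Finset.filter_ne', Finset.card_erase_of_mem (Finset.mem_univ 0),
    Finset.card_univ, ZMod.card]

lemma ncard_transI {I : Set (ZMod n × ZMod n)} : (transI I).ncard = I.ncard := by
  have hEq : transI I = Prod.swap '' I := rfl
  rw [hEq, Set.ncard_image_of_injective _ Prod.swap_injective]

/-- In a circulant AST on `ZMod n`, for every nontrivial relation `R`,
the (unique) nonempty `I ⊆ X` with `R = R_I` satisfies: both projections of `I` equal
`Ω∖{0}`; `R_{I^T}` is also a nontrivial relation of the AST; and for each `x ≠ 0` the
number of `j` with `(x,j) ∈ I` equals the number of `j` with `(x,j) ∈ I^T`. -/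
theorem circulantAST_I_properties (n : ℕ) (hn : 3 ≤ n)
    (A : Set (Set (ZMod n × ZMod n × ZMod n))) (hA : IsCirculantAST A) :
    ∀ R ∈ A, R ∉ trivials (ZMod n) →
      ∀ I : Set (ZMod n × ZMod n), I ⊆ Xset n → I.Nonempty → R = RI I →
        Prod.fst '' I = {x : ZMod n | x ≠ 0} ∧
        Prod.snd '' I = {x : ZMod n | x ≠ 0} ∧
        (RI (transI I) ∈ A ∧ RI (transI I) ∉ trivials (ZMod n)) ∧
        ∀ x : ZMod n, x ≠ 0 →
          {j : ZMod n | (x, j) ∈ I}.ncard = {j : ZMod n | (x, j) ∈ transI I}.ncard := by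
  haveI : NeZero n := ⟨by omega⟩
  obtain ⟨hAST, _hcirc⟩ := hA
  intro R hR hRnt I hIX hIne hReq
  subst hReq
  have hTX : transI I ⊆ Xset n := by
    intro p hp
    obtain ⟨h1, h2, h3⟩ := hIX (mem_transI.1 hp)
    exact ⟨h2, h1, Ne.symm h3⟩
  have hTne : (transI I).Nonempty := hIne.image _
  have hswapA : RI (transI I) ∈ A := by
    have h3 := hAST.2.2.2.2.2.2 (RI I) hR (Equiv.swap 1 2)
    rwa [image_swap23] at h3
  have hswapnt : RI (transI I) ∉ trivials (ZMod n) := RI_not_trivial hTX hTne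
  obtain ⟨c, hc, hrow⟩ := A1_rows hAST hR hRnt
  obtain ⟨c', hc', hrowT⟩ := A1_rows hAST hswapA hswapnt
  have hs1 : I.ncard = (n - 1) * c := ncard_rows (fun p hp => (hIX hp).1) hrow
  have hs2 : (transI I).ncard = (n - 1) * c' := ncard_rows (fun p hp => (hTX hp).1) hrowT
  have hcc : c = c' := by
    have hpos : 0 < n - 1 := by omega
    exact Nat.eq_of_mul_eq_mul_left hpos (by rw [← hs1, ← hs2, ncard_transI])
  refine ⟨?_, ?_, ⟨hswapA, hswapnt⟩, ?_⟩
  · ext x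
    simp only [Set.mem_image, Set.mem_setOf_eq]
    constructor
    · rintro ⟨p, hp, rfl⟩; exact (hIX hp).1
    · intro hx
      have hcount := hrow x hx
      have hne : {j : ZMod n | (x, j) ∈ I}.Nonempty := by
        apply Set.nonempty_of_ncard_ne_zero; rw [hcount]; omega
      obtain ⟨j, hj⟩ := hne
      exact ⟨(x, j), hj, rfl⟩
  · ext x
    simp only [Set.mem_image, Set.mem_setOf_eq]
    constructor
    · rintro ⟨p, hp, rfl⟩; exact (hIX hp).2.1
    · intro hx
      have hcount := hrowT x hx
      have hne : {j : ZMod n | (x, j) ∈ transI I}.Nonempty := by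
        apply Set.nonempty_of_ncard_ne_zero; rw [hcount]; omega
      obtain ⟨j, hj⟩ := hne
      exact ⟨(j, x), mem_transI.1 hj, rfl⟩
  · intro x hx
    rw [hrow x hx, hrowT x hx, hcc]

end CirculantAST
end
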